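/- In a binary network, if a tree vertex is stable then its two children cannot both be reticulations. (Proposition 1(3)) -/

import Mathlib

/-!
Common framework: a binary phylogenetic network is modelled as a directed graph
on an ambient type `V`, given by a vertex set `verts : Set V`, an adjacency
relation `adj : V → V → Prop` (no parallel edges are possible in this model),
and a root vertex `root`.
-/

/-- The outdegree of a vertex `v`: the number of its out-neighbours. -/
noncomputable def outdeg {V : Type*} (adj : V → V → Prop) (v : V) : ℕ :=
  {u | adj v u}.ncard

/-- The indegree of a vertex `v`: the number of its in-neighbours. -/
noncomputable def indeg {V : Type*} (adj : V → V → Prop) (v : V) : ℕ :=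
  {u | adj u v}.ncard

/-- A leaf of the network: a vertex with outdegree 0. -/
def IsLeaf {V : Type*} (verts : Set V) (adj : V → V → Prop) (v : V) : Prop :=
  v ∈ verts ∧ outdeg adj v = 0

/-- A tree vertex: indegree 1 and outdegree 2. -/
def IsTreeVertex {V : Type*} (adj : V → V → Prop) (v : V) : Prop :=
  indeg adj v = 1 ∧ outdeg adj v = 2

/-- A reticulation: indegree 2 and outdegree 1. -/
def IsReticulation {V : Type*} (adj : V → V → Prop) (v : V) : Prop :=
  indeg adj v = 2 ∧ outdeg adj v = 1

/-- `l` is a directed path from `a` to `b`: a nonempty list of vertices starting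
at `a`, ending at `b`, each consecutive pair joined by an edge. -/
def IsPathFromTo {V : Type*} (adj : V → V → Prop) (l : List V) (a b : V) : Prop :=
  l.Chain' adj ∧ l.head? = some a ∧ l.getLast? = some b

/-- A binary phylogenetic network: a finite DAG with a unique root (the only
vertex of indegree 0) of outdegree 2, in which every vertex is reachable from
the root, every leaf has indegree 1, and every other non-root vertex is either
a tree vertex or a reticulation. -/
structure IsBinaryNetwork {V : Type*} (verts : Set V) (adj : V → V → Prop) (root : V) : Prop where
  finite_verts : verts.Finite
  root_mem : root ∈ verts
  adj_mem : ∀ ⦃u v : V⦄, adj u v → u ∈ verts ∧ v ∈ verts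
  acyclic : ∀ v : V, ¬ Relation.TransGen adj v v
  root_indeg : indeg adj root = 0
  root_outdeg : outdeg adj root = 2
  root_unique : ∀ v ∈ verts, indeg adj v = 0 → v = root
  reach : ∀ v ∈ verts, Relation.ReflTransGen adj root v
  leaf_indeg : ∀ v ∈ verts, outdeg adj v = 0 → indeg adj v = 1
  internal_deg : ∀ v ∈ verts, v ≠ root → outdeg adj v ≠ 0 →
      IsTreeVertex adj v ∨ IsReticulation adj v

/-- `x` is stable: there is a leaf `ℓ` such that `x` lies on every directed
path from the root to `ℓ`. -/
def Stable {V : Type*} (verts : Set V) (adj : V → V → Prop) (root x : V) : Prop :=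
  ∃ ℓ, IsLeaf verts adj ℓ ∧ ∀ l : List V, IsPathFromTo adj l root ℓ → x ∈ l

/-- A network is reticulation-visible if every reticulation is stable. -/
def ReticulationVisible {V : Type*} (verts : Set V) (adj : V → V → Prop) (root : V) : Prop :=
  ∀ v ∈ verts, IsReticulation adj v → Stable verts adj root v

/-- A network is nearly stable if every vertex is stable or all of its parents
are stable. -/
def NearlyStable {V : Type*} (verts : Set V) (adj : V → V → Prop) (root : V) : Prop :=
  ∀ v ∈ verts, Stable verts adj root v ∨ ∀ p : V, adj p v → Stable verts adj root p

/-!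
Let `ℓ` be a leaf witnessing the stability of `v`. Among the finitely many children of `v`
from which `ℓ` is reachable, pick one, `c`, that no other of them reaches (the network is
acyclic). If `c` had a parent `u ≠ v`, the path `root ⇝ u → c ⇝ ℓ` would have to pass through
`v`, and not after `c`, so some child `w` of `v` reaches `u`, hence `c` and `ℓ`: a contradiction.
So `v` is the only parent of `c`, while the children of `v` are `c₁` and `c₂`, both with two
parents.
-/

namespace IsPathFromTo

variable {V : Type*} {adj : V → V → Prop} {l : List V} {a b x : V}

lemma ne_nil (h : IsPathFromTo adj l a b) : l ≠ [] := by
  rintro rfl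
  simp [IsPathFromTo] at h

lemma reflTransGen_to_mem (h : IsPathFromTo adj l a b) (hx : x ∈ l) :
    Relation.ReflTransGen adj a x :=
  h.1.induction (Relation.ReflTransGen adj a ·) l (fun _ _ hxy hax => hax.tail hxy)
    (fun hl => by rw [(List.head_eq_iff_head?_eq_some hl).mpr h.2.1]) x hx

lemma reflTransGen_from_mem (h : IsPathFromTo adj l a b) (hx : x ∈ l) :
    Relation.ReflTransGen adj x b :=
  h.1.backwards_induction (Relation.ReflTransGen adj · b) l (fun _ _ hxy hyb => hyb.head hxy)
    (fun hl => by rw [(List.getLast_eq_iff_getLast?_eq_some hl).mpr h.2.2]) x hx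

lemma append {Q T : List V} {u c : V} (hQ : IsPathFromTo adj Q a u) (huc : adj u c)
    (hT : IsPathFromTo adj T c b) : IsPathFromTo adj (Q ++ T) a b := by
  refine ⟨hQ.1.append hT.1 ?_, ?_, ?_⟩
  · simp [hQ.2.2, hT.2.1, huc]
  · rw [List.head?_append_of_ne_nil _ hQ.ne_nil, hQ.2.1]
  · rw [List.getLast?_append_of_ne_nil _ hT.ne_nil, hT.2.2]

end IsPathFromTo

lemma exists_isPathFromTo {V : Type*} {adj : V → V → Prop} {a b : V}
    (h : Relation.ReflTransGen adj a b) : ∃ l, IsPathFromTo adj l a b := by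
  obtain ⟨l, hl, hchain, hhead, hlast⟩ := List.exists_isChain_ne_nil_of_relationReflTransGen h
  exact ⟨l, hchain, by rw [List.head?_eq_some_head hl, hhead],
    by rw [List.getLast?_eq_some_getLast hl, hlast]⟩

lemma Set.Finite.exists_forall_not_transGen {α : Type*} {r : α → α → Prop}
    (hr : ∀ x, ¬ Relation.TransGen r x x) {S : Set α} (hS : S.Finite) (hne : S.Nonempty) :
    ∃ x ∈ S, ∀ y ∈ S, ¬ Relation.TransGen r y x := by
  have : IsStrictOrder α (Relation.TransGen r) :=
    { irrefl := hr, trans := fun _ _ _ => Relation.TransGen.trans }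
  obtain ⟨⟨x, hx⟩, -, hmin⟩ := (hS.wellFoundedOn (r := Relation.TransGen r)).has_min Set.univ
    ⟨⟨hne.some, hne.some_mem⟩, trivial⟩
  exact ⟨x, hx, fun y hy => hmin ⟨y, hy⟩ trivial⟩

lemma eq_or_eq_of_outdeg_eq_two {V : Type*} {adj : V → V → Prop} {v c₁ c₂ w : V}
    (hv : outdeg adj v = 2) (h₁ : adj v c₁) (h₂ : adj v c₂) (hne : c₁ ≠ c₂) (hw : adj v w) :
    w = c₁ ∨ w = c₂ := by
  have hfin : {u | adj v u}.Finite := Set.finite_of_ncard_ne_zero (by rw [← outdeg, hv]; simp)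
  have hchildren : ({c₁, c₂} : Set V) = {u | adj v u} :=
    Set.eq_of_subset_of_ncard_le (Set.pair_subset h₁ h₂)
      (by rw [← outdeg, hv, Set.ncard_pair hne]) hfin
  have hw' : w ∈ ({c₁, c₂} : Set V) := hchildren ▸ hw
  simpa using hw'

lemma IsReticulation.exists_parent_ne {V : Type*} {adj : V → V → Prop} {c : V}
    (hc : IsReticulation adj c) (v : V) : ∃ u, adj u c ∧ u ≠ v := by
  by_contra! h
  have hle : {u | adj u c}.ncard ≤ ({v} : Set V).ncard :=
    Set.ncard_le_ncard (fun u hu => h u hu) (Set.finite_singleton v)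
  rw [Set.ncard_singleton, ← indeg, hc.1] at hle
  omega

section BinaryNetwork

variable {V : Type*} {verts : Set V} {adj : V → V → Prop} {root v ℓ : V}

lemma exists_child_transGen_of_parent_ne (hN : IsBinaryNetwork verts adj root)
    (hthrough : ∀ l, IsPathFromTo adj l root ℓ → v ∈ l) {c u : V} (hvc : adj v c)
    (hcℓ : Relation.ReflTransGen adj c ℓ) (huc : adj u c) (huv : u ≠ v) :
    ∃ w, adj v w ∧ Relation.ReflTransGen adj w ℓ ∧ Relation.TransGen adj w c := by
  obtain ⟨Q, hQ⟩ := exists_isPathFromTo (hN.reach u (hN.adj_mem huc).1)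
  obtain ⟨T, hT⟩ := exists_isPathFromTo hcℓ
  rcases List.mem_append.mp (hthrough _ (hQ.append huc hT)) with hvQ | hvT
  · obtain ⟨w, hvw, hwu⟩ := (hQ.reflTransGen_from_mem hvQ).cases_head.resolve_left huv.symm
    exact ⟨w, hvw, hwu.trans (hcℓ.head huc), .tail' hwu huc⟩
  · exact (hN.acyclic v (.head' hvc (hT.reflTransGen_to_mem hvT))).elim

lemma exists_child_with_sole_parent (hN : IsBinaryNetwork verts adj root) (hℓ : ℓ ∈ verts)
    (hthrough : ∀ l, IsPathFromTo adj l root ℓ → v ∈ l) (hvℓ : v ≠ ℓ) :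
    ∃ c, adj v c ∧ ∀ u, adj u c → u = v := by
  set S := {c | adj v c ∧ Relation.ReflTransGen adj c ℓ}
  have hS : S.Finite := hN.finite_verts.subset fun _ hc => (hN.adj_mem hc.1).2
  have hSne : S.Nonempty := by
    obtain ⟨P, hP⟩ := exists_isPathFromTo (hN.reach ℓ hℓ)
    exact (hP.reflTransGen_from_mem (hthrough P hP)).cases_head.resolve_left hvℓ
  obtain ⟨c, ⟨hvc, hcℓ⟩, hmin⟩ := hS.exists_forall_not_transGen hN.acyclic hSne
  refine ⟨c, hvc, fun u huc => by_contra fun huv => ?_⟩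
  obtain ⟨w, hvw, hwℓ, hwc⟩ := exists_child_transGen_of_parent_ne hN hthrough hvc hcℓ huc huv
  exact hmin w ⟨hvw, hwℓ⟩ hwc

end BinaryNetwork

/-- In a binary network, if a tree vertex is stable then its two children
cannot both be reticulations. (Proposition 1(3)) -/
theorem not_both_children_reticulations {V : Type*} (verts : Set V)
    (adj : V → V → Prop) (root : V) (hN : IsBinaryNetwork verts adj root)
    (v c₁ c₂ : V) (hv : IsTreeVertex adj v) (hstable : Stable verts adj root v)
    (h₁ : adj v c₁) (h₂ : adj v c₂) (hne : c₁ ≠ c₂) :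
    ¬ (IsReticulation adj c₁ ∧ IsReticulation adj c₂) := by
  rintro ⟨hr₁, hr₂⟩
  obtain ⟨ℓ, ⟨hℓ, hℓleaf⟩, hthrough⟩ := hstable
  have hvℓ : v ≠ ℓ := by
    rintro rfl
    have := hv.2
    omega
  obtain ⟨c, hvc, hsole⟩ := exists_child_with_sole_parent hN hℓ hthrough hvℓ
  have hc : IsReticulation adj c :=
    (eq_or_eq_of_outdeg_eq_two hv.2 h₁ h₂ hne hvc).elim (· ▸ hr₁) (· ▸ hr₂)
  obtain ⟨u, huc, huv⟩ := hc.exists_parent_ne v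
  exact huv (hsole u huc)
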